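/- arXiv:2510.01653 — 2 statements merged into one kernel-verified Lean document; each statement's English description precedes it below -/
import Mathlib

section
/- Let X ⊂ L⁰(ℝⁿ) be a quasi-Banach space of measurable functions satisfying the ideal property (if |g| ≤ |f| a.e. and f ∈ X then g ∈ X with ‖g‖_X ≤ ‖f‖_X). If the Hardy–Littlewood maximal operator M is weakly bounded on X, i.e., there is C > 0 such that λ‖χ_{{Mf > λ}}‖_X ≤ C‖f‖_X for all λ > 0 and f ∈ X, then there exists C' > 0 such that for every cube Q with sides parallel to the axes, ‖χ_Q‖_X · ‖χ_Q‖_{X'} ≤ C'|Q|, where ‖g‖_{X'} = sup_{‖h‖_X ≤ 1} ∫|gh|. -/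
open MeasureTheory ENNReal NNReal Set

noncomputable section

/-- Euclidean space `ℝⁿ`. -/
abbrev En (n : ℕ) : Type := EuclideanSpace ℝ (Fin n)

/-- The axis-parallel half-open cube `Q(x,r) = x + [-r, r)ⁿ`. -/
def Cube {n : ℕ} (x : En n) (r : ℝ) : Set (En n) :=
  {y | ∀ i, x i - r ≤ y i ∧ y i < x i + r}

/-- The uncentered Hardy–Littlewood maximal operator over axis-parallel cubes. -/
def maximal {n : ℕ} (f : En n → ℝ≥0∞) (x : En n) : ℝ≥0∞ :=
  ⨆ (c : En n) (r : ℝ) (_ : 0 < r) (_ : x ∈ Cube c r),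
    (∫⁻ y in Cube c r, f y) / volume (Cube c r)

/-- The associate (Köthe dual) functional `‖g‖_{X'} = sup_{‖h‖_X ≤ 1} ∫ |g h|`. -/
def associate {n : ℕ} (N : (En n → ℝ≥0∞) → ℝ≥0∞) (g : En n → ℝ≥0∞) : ℝ≥0∞ :=
  ⨆ (h : En n → ℝ≥0∞) (_ : N h ≤ 1), ∫⁻ x, g x * h x

/-- A quasi-Banach function quasi-norm with the ideal (lattice) property. -/
structure IsQuasiBanachFN {n : ℕ} (N : (En n → ℝ≥0∞) → ℝ≥0∞) : Prop where
  smul : ∀ (c : ℝ≥0) (f : En n → ℝ≥0∞), N (fun x => (c : ℝ≥0∞) * f x) = (c : ℝ≥0∞) * N f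
  quasi_triangle : ∃ K : ℝ≥0∞, 1 ≤ K ∧ K ≠ ∞ ∧
    ∀ f g : En n → ℝ≥0∞, N (f + g) ≤ K * (N f + N g)
  ideal : ∀ f g : En n → ℝ≥0∞, (∀ᵐ x ∂volume, g x ≤ f x) → N g ≤ N f

/-- A quasi-rBfs: a quasi-Banach function quasi-norm with the ideal property such that
indicators of cubes have finite quasi-norm. -/
structure IsQuasiRBFS {n : ℕ} (N : (En n → ℝ≥0∞) → ℝ≥0∞) extends IsQuasiBanachFN N : Prop where
  cube_lt_top : ∀ (c : En n) (r : ℝ), 0 < r → N ((Cube c r).indicator 1) < ∞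

/-- A Banach function norm: ideal property, homogeneity and the triangle inequality. -/
structure IsBanachFN {n : ℕ} (N : (En n → ℝ≥0∞) → ℝ≥0∞) : Prop where
  smul : ∀ (c : ℝ≥0) (f : En n → ℝ≥0∞), N (fun x => (c : ℝ≥0∞) * f x) = (c : ℝ≥0∞) * N f
  add_le : ∀ f g : En n → ℝ≥0∞, N (f + g) ≤ N f + N g
  ideal : ∀ f g : En n → ℝ≥0∞, (∀ᵐ x ∂volume, g x ≤ f x) → N g ≤ N f

/-- `φ` is almost decreasing in its second variable. -/
def AlmostDecr {n : ℕ} (φ : En n → ℝ → ℝ) : Prop :=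
  ∃ C > (0 : ℝ), ∀ (x : En n) (r s : ℝ), 0 < s → s ≤ r → φ x r ≤ C * φ x s

/-- `φ(x,r) ≍ φ(y,r)` whenever `|x - y| ≤ r`. -/
def NearComparable {n : ℕ} (φ : En n → ℝ → ℝ) : Prop :=
  ∃ C ≥ (1 : ℝ), ∀ (x y : En n) (r : ℝ), 0 < r → ‖x - y‖ ≤ r →
    C⁻¹ * φ y r ≤ φ x r ∧ φ x r ≤ C * φ y r

/-- `φ` is positive. -/
def PhiPos {n : ℕ} (φ : En n → ℝ → ℝ) : Prop :=
  ∀ (x : En n) (r : ℝ), 0 < r → 0 < φ x r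

/-- The average `f_Q` of `f` over the cube `Q(c,r)`. -/
def cubeAvg {n : ℕ} (c : En n) (r : ℝ) (f : En n → ℝ) : ℝ :=
  ⨍ z in Cube c r, f z

/-- The pointwise oscillation `|f - f_Q|` (as an `ℝ≥0∞`-valued function). -/
def osc {n : ℕ} (c : En n) (r : ℝ) (f : En n → ℝ) : En n → ℝ≥0∞ :=
  fun y => (‖f y - cubeAvg c r f‖₊ : ℝ≥0∞)

/-- The Campanato norm `‖f‖_{L_{1,φ}} = sup_Q φ(Q) |Q|⁻¹ ∫_Q |f - f_Q|`. -/
def campanato {n : ℕ} (φ : En n → ℝ → ℝ) (f : En n → ℝ) : ℝ≥0∞ :=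
  ⨆ (c : En n) (r : ℝ) (_ : 0 < r),
    ENNReal.ofReal (φ c r) * ((∫⁻ y in Cube c r, osc c r f y) / volume (Cube c r))

/-- The quantity `sup_Q φ(Q) ‖(f - f_Q)χ_Q‖_X / ‖χ_Q‖_X`. -/
def ratioNorm {n : ℕ} (N : (En n → ℝ≥0∞) → ℝ≥0∞) (φ : En n → ℝ → ℝ) (f : En n → ℝ) : ℝ≥0∞ :=
  ⨆ (c : En n) (r : ℝ) (_ : 0 < r),
    ENNReal.ofReal (φ c r) *
      (N ((Cube c r).indicator (osc c r f)) / N ((Cube c r).indicator 1))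

/-- The vector-valued maximal bound `‖Σ (M f_j)^η‖_X ≤ C ‖Σ |f_j|^η‖_X`. -/
def VectorMaximal {n : ℕ} (N : (En n → ℝ≥0∞) → ℝ≥0∞) (η : ℝ) (C : ℝ≥0∞) : Prop :=
  ∀ f : ℕ → En n → ℝ≥0∞, (∀ j, Measurable (f j)) →
    N (fun x => ∑' j, maximal (f j) x ^ η) ≤ C * N (fun x => ∑' j, f j x ^ η)

/-! For `λ` below the average `h_Q` of `h` over a cube `Q`, every point of `Q` lies in
`{M h > λ}`, so the ideal property and the weak bound give `λ ‖χ_Q‖_X ≤ C ‖h‖_X`.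
Letting `λ ↑ h_Q` yields `‖χ_Q‖_X ∫_Q h ≤ C |Q| ‖h‖_X`, and the supremum over `‖h‖_X ≤ 1`
is the claim. -/

lemma lintegral_indicator_one_mul {α : Type*} [MeasurableSpace α] {μ : Measure α} {s : Set α}
    (hs : MeasurableSet s) (f : α → ℝ≥0∞) :
    ∫⁻ x, s.indicator 1 x * f x ∂μ = ∫⁻ x in s, f x ∂μ := by
  simp_rw [← indicator_mul_left, Pi.one_apply, one_mul]
  exact lintegral_indicator hs f

section

variable {n : ℕ}

lemma cube_eq_preimage_pi (c : En n) (r : ℝ) :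
    Cube c r = WithLp.ofLp ⁻¹' univ.pi fun i => Ico (c i - r) (c i + r) := by
  ext y
  simp [Cube]

lemma measurableSet_cube (c : En n) (r : ℝ) : MeasurableSet (Cube c r) := by
  rw [cube_eq_preimage_pi]
  exact (MeasurableSet.univ_pi fun _ => measurableSet_Ico).preimage
    (PiLp.volume_preserving_ofLp (Fin n)).measurable

lemma volume_cube (c : En n) (r : ℝ) :
    volume (Cube c r) = ENNReal.ofReal (2 * r) ^ n := by
  rw [cube_eq_preimage_pi, (PiLp.volume_preserving_ofLp (Fin n)).measure_preimage
    (MeasurableSet.univ_pi fun _ => measurableSet_Ico).nullMeasurableSet, Real.volume_pi_Ico]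
  simp only [add_sub_sub_cancel, ← two_mul]
  simp

lemma volume_cube_ne_zero (c : En n) {r : ℝ} (hr : 0 < r) : volume (Cube c r) ≠ 0 := by
  simp [volume_cube, hr]

lemma volume_cube_ne_top (c : En n) (r : ℝ) : volume (Cube c r) ≠ ∞ := by
  rw [volume_cube]
  exact ENNReal.pow_ne_top ENNReal.ofReal_ne_top

def MaximalWeakBounded (N : (En n → ℝ≥0∞) → ℝ≥0∞) (C : ℝ≥0∞) : Prop :=
  ∀ (lam : ℝ≥0∞) (f : En n → ℝ≥0∞), 0 < lam →
    lam * N ({x | lam < maximal f x}.indicator 1) ≤ C * N f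

lemma average_le_maximal (f : En n → ℝ≥0∞) {c x : En n} {r : ℝ} (hr : 0 < r)
    (hx : x ∈ Cube c r) : (∫⁻ y in Cube c r, f y) / volume (Cube c r) ≤ maximal f x :=
  le_iSup₂_of_le c r (le_iSup₂_of_le hr hx le_rfl)

variable {N : (En n → ℝ≥0∞) → ℝ≥0∞} {C : ℝ≥0∞}

lemma norm_indicator_cube_mul_average_le
    (hideal : ∀ f g : En n → ℝ≥0∞, (∀ᵐ x ∂volume, g x ≤ f x) → N g ≤ N f)
    (hweak : MaximalWeakBounded N C) (f : En n → ℝ≥0∞) (c : En n) {r : ℝ} (hr : 0 < r) :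
    N ((Cube c r).indicator 1) * ((∫⁻ y in Cube c r, f y) / volume (Cube c r)) ≤ C * N f := by
  rw [mul_comm]
  refine ENNReal.mul_le_of_forall_lt fun l hl B hB => ?_
  rcases eq_zero_or_pos l with rfl | hl0
  · simp
  have hsub : Cube c r ⊆ {x | l < maximal f x} := fun x hx =>
    hl.trans_le (average_le_maximal f hr hx)
  calc l * B ≤ l * N ({x | l < maximal f x}.indicator 1) := by
        gcongr
        exact hB.le.trans (hideal _ _ (ae_of_all _ (indicator_le_indicator_of_subset hsub
          fun _ => zero_le)))
    _ ≤ C * N f := hweak l f hl0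

lemma norm_indicator_cube_mul_associate_le
    (hideal : ∀ f g : En n → ℝ≥0∞, (∀ᵐ x ∂volume, g x ≤ f x) → N g ≤ N f)
    (hweak : MaximalWeakBounded N C) (c : En n) {r : ℝ} (hr : 0 < r) :
    N ((Cube c r).indicator 1) * associate N ((Cube c r).indicator 1)
      ≤ C * volume (Cube c r) := by
  simp only [associate, ENNReal.mul_iSup]
  refine iSup₂_le fun h hh => ?_
  have hint : ∫⁻ x in Cube c r, h x
      = (∫⁻ x in Cube c r, h x) / volume (Cube c r) * volume (Cube c r) :=
    (ENNReal.div_mul_cancel (volume_cube_ne_zero c hr) (volume_cube_ne_top c r)).symm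
  rw [lintegral_indicator_one_mul (measurableSet_cube c r), hint, ← mul_assoc]
  calc _ ≤ C * N h * volume (Cube c r) :=
        mul_le_mul_left (norm_indicator_cube_mul_average_le hideal hweak h c hr) _
    _ ≤ C * volume (Cube c r) := mul_le_mul_left (mul_le_of_le_one_right' hh) _

end

/-- if the Hardy–Littlewood maximal operator is weakly bounded on a
quasi-Banach function space `X` with the ideal property, then
`‖χ_Q‖_X ‖χ_Q‖_{X'} ≤ C' |Q|` for all cubes `Q`. -/
theorem statement0 {n : ℕ} (N : (En n → ℝ≥0∞) → ℝ≥0∞) (hN : IsQuasiBanachFN N)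
    (hweak : ∃ C : ℝ≥0∞, 0 < C ∧ C ≠ ∞ ∧
      ∀ (lam : ℝ≥0∞) (f : En n → ℝ≥0∞), 0 < lam →
        lam * N ({x | lam < maximal f x}.indicator 1) ≤ C * N f) :
    ∃ C : ℝ≥0∞, 0 < C ∧ C ≠ ∞ ∧ ∀ (c : En n) (r : ℝ), 0 < r →
      N ((Cube c r).indicator 1) * associate N ((Cube c r).indicator 1)
        ≤ C * volume (Cube c r) := by
  obtain ⟨C, hC0, hCtop, hC⟩ := hweak
  exact ⟨C, hC0, hCtop, fun c r hr => norm_indicator_cube_mul_associate_le hN.ideal hC c hr⟩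
end
end

section
/- Let 1 < η < ∞. For every nonnegative measurable f and g on ℝⁿ, ∫_{ℝⁿ}(Mf(x))^η g(x)dx ≤ C_{n,η} ∫_{ℝⁿ} f(x)^η Mg(x)dx, where M is the Hardy–Littlewood maximal operator (Fefferman–Stein dual inequality). -/
open MeasureTheory ENNReal NNReal Set

noncomputable section

/-!
Put `μ = g dx`. A Vitali covering of compact subsets of the open set `{Mf > λ}` by cubes on which
the average of `f` exceeds `λ`, together with `|5Q|⁻¹ ∫_{5Q} g ≤ Mg` on such a cube `Q`, gives the
weak-type bound `λ μ{Mf > λ} ≤ 5ⁿ ∫ f Mg`. Since `{Mf > λ} ⊆ {M(f 1_{2f > λ}) > λ/2}`, applying it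
to the part of `f` above `λ/2` and integrating against `d(λ^η)` (layer cake, then Tonelli) yields
the theorem with `C = 2^η 5ⁿ η/(η-1)`.
-/

open Filter Topology

open Filter Topology

namespace Cube

variable {n : ℕ}

lemma measurableSet (c : En n) (r : ℝ) : MeasurableSet (Cube c r) := by
  have : Cube c r = ⋂ i, (fun y : En n => y i) ⁻¹' Ico (c i - r) (c i + r) := by
    ext y; simp [Cube, mem_Ico]
  rw [this]
  exact .iInter fun i => measurableSet_Ico.preimage (by fun_prop)

lemma volume_eq (c : En n) (r : ℝ) : volume (Cube c r) = ENNReal.ofReal (2 * r) ^ n := by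
  have hpre : (MeasurableEquiv.toLp 2 (Fin n → ℝ)).symm ⁻¹'
      (univ.pi fun i => Ico (c i - r) (c i + r)) = Cube c r := by
    ext y; simp [Cube, mem_Ico]
  rw [← hpre, (EuclideanSpace.volume_preserving_symm_measurableEquiv_toLp (Fin n)).measure_preimage
    (MeasurableSet.univ_pi fun i => measurableSet_Ico).nullMeasurableSet, volume_pi_pi]
  simp only [Real.volume_Ico, add_sub_sub_cancel, ← two_mul, Finset.prod_const, Finset.card_univ,
    Fintype.card_fin]

lemma volume_pos (c : En n) {r : ℝ} (hr : 0 < r) : 0 < volume (Cube c r) := by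
  rw [volume_eq]; positivity

lemma volume_ne_top (c : En n) (r : ℝ) : volume (Cube c r) ≠ ∞ := by
  rw [volume_eq]; exact pow_ne_top ofReal_ne_top

lemma volume_mul (c : En n) {a : ℝ} (ha : 0 ≤ a) (r : ℝ) :
    volume (Cube c (a * r)) = ENNReal.ofReal a ^ n * volume (Cube c r) := by
  rw [volume_eq, volume_eq, ← mul_pow, ← ENNReal.ofReal_mul ha]
  ring_nf

lemma self_mem (c : En n) {r : ℝ} (hr : 0 < r) : c ∈ Cube c r :=
  fun _ => ⟨by linarith, by linarith⟩

lemma mono (c : En n) {r r' : ℝ} (h : r ≤ r') : Cube c r ⊆ Cube c r' :=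
  fun _ hy i => ⟨by linarith [(hy i).1], by linarith [(hy i).2]⟩

lemma subset_of_inter_nonempty {c c' : En n} {r r' : ℝ} (h : (Cube c r ∩ Cube c' r').Nonempty) :
    Cube c r ⊆ Cube c' (r' + 2 * r) := by
  obtain ⟨z, hz, hz'⟩ := h
  intro y hy i
  constructor <;> linarith [hz i, hz' i, hy i]

lemma mem_nhds {c x : En n} {r R : ℝ} (hx : x ∈ Cube c r) (h : r < R) : Cube c R ∈ 𝓝 x := by
  refine Metric.mem_nhds_iff.2 ⟨R - r, by linarith, fun y hy i => ?_⟩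
  have hyi : |y i - x i| < R - r :=
    (PiLp.dist_apply_le y x i).trans_lt (Metric.mem_ball.1 hy)
  obtain ⟨h1, h2⟩ := hx i
  constructor <;> linarith [abs_lt.1 hyi]

end Cube

section Maximal

variable {n : ℕ} {f g : En n → ℝ≥0∞} {x c : En n} {r : ℝ} {lam : ℝ≥0∞}

lemma le_maximal (hr : 0 < r) (hx : x ∈ Cube c r) :
    (∫⁻ y in Cube c r, f y) / volume (Cube c r) ≤ maximal f x :=
  le_iSup₂_of_le c r <| le_iSup₂_of_le hr hx le_rfl

lemma lt_maximal_of_mul_volume_lt (hr : 0 < r) (hx : x ∈ Cube c r)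
    (h : lam * volume (Cube c r) < ∫⁻ y in Cube c r, f y) : lam < maximal f x :=
  ((ENNReal.lt_div_iff_mul_lt (.inl (Cube.volume_pos c hr).ne') (.inl (Cube.volume_ne_top c r))).2
    h).trans_le (le_maximal hr hx)

lemma exists_cube_mem_nhds_of_lt_maximal (h : lam < maximal f x) :
    ∃ c R, 0 < R ∧ Cube c R ∈ 𝓝 x ∧ lam * volume (Cube c R) < ∫⁻ y in Cube c R, f y := by
  have hlam : lam ≠ ∞ := h.ne_top
  simp only [maximal, lt_iSup_iff] at h
  obtain ⟨c, r, hr, hx, havg⟩ := h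
  rw [ENNReal.lt_div_iff_mul_lt (.inl (Cube.volume_pos c hr).ne') (.inl (Cube.volume_ne_top c r))]
    at havg
  -- a slightly larger concentric cube still has average above `lam` and is a neighbourhood of `x`
  have hcont : Tendsto (fun R => lam * volume (Cube c R)) (𝓝[>] r)
      (𝓝 (lam * volume (Cube c r))) := by
    simp only [Cube.volume_eq]
    have : Continuous fun R : ℝ => ENNReal.ofReal (2 * R) ^ n :=
      (ENNReal.continuous_pow n).comp (ENNReal.continuous_ofReal.comp (by fun_prop))
    exact ENNReal.Tendsto.const_mul (this.tendsto r |>.mono_left nhdsWithin_le_nhds) (.inr hlam)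
  obtain ⟨R, hR, hrR⟩ := ((hcont.eventually_lt_const havg).and self_mem_nhdsWithin).exists
  exact ⟨c, R, hr.trans hrR, Cube.mem_nhds hx hrR,
    hR.trans_le (lintegral_mono_set (Cube.mono c hrR.le))⟩

lemma lowerSemicontinuous_maximal (f : En n → ℝ≥0∞) : LowerSemicontinuous (maximal f) :=
  fun _ _ h => by
    obtain ⟨c, R, hR, hQ, hlt⟩ := exists_cube_mem_nhds_of_lt_maximal h
    filter_upwards [hQ] with y hy using lt_maximal_of_mul_volume_lt hR hy hlt

lemma measurable_maximal (f : En n → ℝ≥0∞) : Measurable (maximal f) :=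
  (lowerSemicontinuous_maximal f).measurable

lemma maximal_le_maximal_indicator_add (τ : ℝ≥0∞) (f : En n → ℝ≥0∞) (x : En n) :
    maximal f x ≤ maximal ({y | τ < f y}.indicator f) x + τ := by
  refine iSup₂_le fun c r => iSup₂_le fun hr hx => ?_
  have hle : ∀ y, f y ≤ {y | τ < f y}.indicator f y + τ := fun y => by
    by_cases h : τ < f y
    · simp [h]
    · simpa [h] using not_lt.1 h
  calc (∫⁻ y in Cube c r, f y) / volume (Cube c r)
      ≤ (∫⁻ y in Cube c r, ({y | τ < f y}.indicator f y + τ)) / volume (Cube c r) := by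
        gcongr with y; exact hle y
    _ = (∫⁻ y in Cube c r, {y | τ < f y}.indicator f y) / volume (Cube c r) + τ := by
        rw [lintegral_add_right _ measurable_const, setLIntegral_const, ENNReal.add_div,
          ENNReal.mul_div_cancel_right (Cube.volume_pos c hr).ne' (Cube.volume_ne_top c r)]
    _ ≤ maximal ({y | τ < f y}.indicator f) x + τ := by gcongr; exact le_maximal hr hx

end Maximal

section WeakType

variable {n : ℕ} {f g : En n → ℝ≥0∞} {c : En n} {R : ℝ} {lam : ℝ≥0∞}

lemma mul_lintegral_cube_le_lintegral_mul_maximal {a : ℝ} (ha : 1 ≤ a) (hR : 0 < R)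
    (h : lam * volume (Cube c R) ≤ ∫⁻ y in Cube c R, f y) :
    lam * ∫⁻ y in Cube c (a * R), g y ≤
      ENNReal.ofReal a ^ n * ∫⁻ y in Cube c R, f y * maximal g y := by
  set v := volume (Cube c R)
  set A := ∫⁻ y in Cube c (a * R), g y
  have hk : ENNReal.ofReal a ^ n * v ≠ ∞ :=
    ENNReal.mul_ne_top (pow_ne_top ofReal_ne_top) (Cube.volume_ne_top c R)
  have hA : ∀ y ∈ Cube c R, A ≤ ENNReal.ofReal a ^ n * v * maximal g y := fun y hy => by
    have := le_maximal (f := g) (by positivity)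
      (Cube.mono c (le_mul_of_one_le_left hR.le ha) hy)
    rw [Cube.volume_mul c (by linarith), ENNReal.div_le_iff (mul_ne_zero (pow_ne_zero _
      (ENNReal.ofReal_pos.2 (by linarith)).ne') (Cube.volume_pos c hR).ne') hk] at this
    exact this.trans_eq (mul_comm _ _)
  refine (ENNReal.mul_le_mul_iff_left (Cube.volume_pos c hR).ne' (Cube.volume_ne_top c R)).1 ?_
  calc lam * A * v = A * (lam * v) := by ring
    _ ≤ A * ∫⁻ y in Cube c R, f y := by gcongr
    _ ≤ ∫⁻ y in Cube c R, A * f y := lintegral_const_mul_le _ _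
    _ ≤ ∫⁻ y in Cube c R, ENNReal.ofReal a ^ n * v * maximal g y * f y :=
        setLIntegral_mono' (Cube.measurableSet c R) fun y hy => by gcongr; exact hA y hy
    _ = ENNReal.ofReal a ^ n * v * ∫⁻ y in Cube c R, f y * maximal g y := by
        rw [← lintegral_const_mul' _ _ hk]
        congr 1 with y
        ring
    _ = ENNReal.ofReal a ^ n * (∫⁻ y in Cube c R, f y * maximal g y) * v := by ring

lemma mul_withDensity_le_of_isCompact {K : Set (En n)} (hK : IsCompact K)
    (hKE : K ⊆ {x | lam < maximal f x}) :
    lam * volume.withDensity g K ≤ 5 ^ n * ∫⁻ x, f x * maximal g x := by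
  classical
  choose! c R hR hQ hlt using fun x (hx : x ∈ K) => exists_cube_mem_nhds_of_lt_maximal (hKE hx)
  obtain ⟨t, htK, hKt⟩ := hK.elim_nhds_subcover (fun x => Cube (c x) (R x)) hQ
  obtain ⟨M, hM⟩ := (t.finite_toSet.image R).bddAbove
  -- each cube of the subcover meets a selected disjoint cube at least half as large,
  -- hence lies in its 5-fold dilate
  obtain ⟨u, hut, hdisj, hcov⟩ := Vitali.exists_disjoint_subfamily_covering_enlargement
    (fun x => Cube (c x) (R x)) t R 2 one_lt_two (fun x hx => (hR x (htK x hx)).le) M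
    (fun x hx => hM (mem_image_of_mem R hx))
    (fun x hx => ⟨c x, Cube.self_mem (c x) (hR x (htK x hx))⟩)
  have hu : u.Finite := t.finite_toSet.subset hut
  set s := hu.toFinset
  have hRs : ∀ j ∈ s, 0 < R j := fun j hj => hR j (htK j (hut (hu.mem_toFinset.1 hj)))
  have hKs : K ⊆ ⋃ j ∈ s, Cube (c j) (5 * R j) := by
    intro x hx
    obtain ⟨i, hit, hxi⟩ := mem_iUnion₂.1 (hKt hx)
    obtain ⟨j, hju, hij, hRij⟩ := hcov i hit
    refine mem_iUnion₂.2 ⟨j, hu.mem_toFinset.2 hju, Cube.mono (c j) ?_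
      (Cube.subset_of_inter_nonempty hij hxi)⟩
    linarith
  calc lam * volume.withDensity g K
      ≤ lam * ∑ j ∈ s, volume.withDensity g (Cube (c j) (5 * R j)) := by
        gcongr
        exact (measure_mono hKs).trans (measure_biUnion_finset_le _ _)
    _ = ∑ j ∈ s, lam * ∫⁻ y in Cube (c j) (5 * R j), g y := by
        simp only [Finset.mul_sum, withDensity_apply _ (Cube.measurableSet _ _)]
    _ ≤ ∑ j ∈ s, 5 ^ n * ∫⁻ y in Cube (c j) (R j), f y * maximal g y := by
        refine Finset.sum_le_sum fun j hj => ?_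
        simpa using mul_lintegral_cube_le_lintegral_mul_maximal (a := 5) (by norm_num) (hRs j hj)
          (hlt j (htK j (hut (hu.mem_toFinset.1 hj)))).le
    _ = 5 ^ n * ∫⁻ y in ⋃ j ∈ s, Cube (c j) (R j), f y * maximal g y := by
        rw [lintegral_biUnion_finset (by simpa [s] using hdisj)
          (fun j _ => Cube.measurableSet _ _), Finset.mul_sum]
    _ ≤ 5 ^ n * ∫⁻ y, f y * maximal g y := by gcongr; exact Measure.restrict_le_self

lemma mul_withDensity_lt_maximal_le (f g : En n → ℝ≥0∞) (lam : ℝ≥0∞) :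
    lam * volume.withDensity g {x | lam < maximal f x} ≤ 5 ^ n * ∫⁻ x, f x * maximal g x := by
  -- valid for every measure, even if `g` is not locally integrable
  have hreg : (volume.withDensity g).InnerRegularWRT IsCompact IsOpen :=
    (Measure.InnerRegularWRT.isCompact_isClosed _).trans
      (Measure.InnerRegularWRT.of_pseudoMetrizableSpace _)
  change lam * volume.withDensity g (maximal f ⁻¹' Ioi lam) ≤ _
  rw [hreg.measure_eq_iSup ((lowerSemicontinuous_maximal f).isOpen_preimage lam)]
  simp only [ENNReal.mul_iSup]
  exact iSup₂_le fun K hKE => iSup_le fun hK => mul_withDensity_le_of_isCompact hK hKE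

end WeakType

lemma mul_withDensity_lt_maximal_le_indicator {n : ℕ} (f g : En n → ℝ≥0∞) {τ : ℝ≥0∞}
    (hτ : τ ≠ ∞) :
    τ * volume.withDensity g {x | τ < maximal f x} ≤
      2 * 5 ^ n * ∫⁻ x, {y | τ < 2 * f y}.indicator f x * maximal g x := by
  set σ := τ / 2
  have hσ : σ ≠ ∞ := ENNReal.div_ne_top hτ two_ne_zero
  have hτσ : τ = σ + σ := (ENNReal.add_halves τ).symm
  have hset : {y | τ < 2 * f y} = {y | σ < f y} := by
    ext y
    simp [σ, ENNReal.div_lt_iff, mul_comm]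
  have hsub : {x | τ < maximal f x} ⊆ {x | σ < maximal ({y | σ < f y}.indicator f) x} :=
    fun x hx => (ENNReal.add_lt_add_iff_right hσ).1 <|
      (hτσ ▸ hx : σ + σ < maximal f x).trans_le (maximal_le_maximal_indicator_add σ f x)
  calc τ * volume.withDensity g {x | τ < maximal f x}
      ≤ 2 * (σ * volume.withDensity g {x | σ < maximal ({y | σ < f y}.indicator f) x}) := by
        rw [← mul_assoc, two_mul, ← hτσ]
        gcongr
    _ ≤ 2 * (5 ^ n * ∫⁻ x, {y | σ < f y}.indicator f x * maximal g x) := by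
        gcongr 2 * ?_
        exact mul_withDensity_lt_maximal_le _ _ _
    _ = 2 * 5 ^ n * ∫⁻ x, {y | τ < 2 * f y}.indicator f x * maximal g x := by
        rw [hset, mul_assoc]

lemma lintegral_Ioo_zero_ofReal_rpow_sub_one {b p : ℝ} (hb : 0 ≤ b) (hp : 0 < p) :
    ∫⁻ t in Ioo 0 b, ENNReal.ofReal (t ^ (p - 1)) = ENNReal.ofReal (b ^ p / p) := by
  rw [Measure.restrict_congr_set Ioo_ae_eq_Ioc, ← ofReal_integral_eq_lintegral_ofReal]
  · rw [← intervalIntegral.integral_of_le hb, integral_rpow (.inl (by linarith)),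
      sub_add_cancel, Real.zero_rpow hp.ne', sub_zero]
  · have := intervalIntegral.intervalIntegrable_rpow' (a := 0) (b := b) (r := p - 1) (by linarith)
    rwa [intervalIntegrable_iff, uIoc_of_le hb] at this
  · filter_upwards [self_mem_ae_restrict measurableSet_Ioc] with t ht
    exact Real.rpow_nonneg ht.1.le _

lemma lintegral_Ioi_indicator_ofReal_rpow_sub_one (a : ℝ≥0∞) {p : ℝ} (hp : 0 < p) :
    ∫⁻ t in Ioi 0, {t : ℝ | ENNReal.ofReal t < a}.indicator
      (fun t => ENNReal.ofReal (t ^ (p - 1))) t = a ^ p / ENNReal.ofReal p := by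
  rw [lintegral_indicator (measurableSet_lt ENNReal.measurable_ofReal measurable_const),
    Measure.restrict_restrict (measurableSet_lt ENNReal.measurable_ofReal measurable_const)]
  rcases eq_or_ne a ∞ with rfl | ha
  · simp only [ENNReal.ofReal_lt_top, ofPred_true, univ_inter, ENNReal.top_rpow_of_pos hp,
      ENNReal.top_div_of_ne_top ofReal_ne_top]
    by_contra h
    exact not_integrableOn_Ioi_rpow (p - 1) ⟨by fun_prop,
      (hasFiniteIntegral_iff_ofReal (ae_restrict_of_forall_mem measurableSet_Ioi
        fun t ht => Real.rpow_nonneg (le_of_lt ht) _)).2 (lt_top_iff_ne_top.2 h)⟩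
  · have hIoo : {t : ℝ | ENNReal.ofReal t < a} ∩ Ioi 0 = Ioo 0 a.toReal := by
      ext t
      simp only [mem_inter_iff, mem_ofPred_eq, mem_Ioi, mem_Ioo]
      constructor
      · rintro ⟨h, ht⟩; exact ⟨ht, (ENNReal.ofReal_lt_iff_lt_toReal ht.le ha).1 h⟩
      · rintro ⟨ht, h⟩; exact ⟨(ENNReal.ofReal_lt_iff_lt_toReal ht.le ha).2 h, ht⟩
    rw [hIoo, lintegral_Ioo_zero_ofReal_rpow_sub_one ENNReal.toReal_nonneg hp,
      ENNReal.ofReal_div_of_pos hp, ← ENNReal.ofReal_rpow_of_nonneg ENNReal.toReal_nonneg hp.le,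
      ENNReal.ofReal_toReal ha]

theorem lintegral_rpow_eq_lintegral_meas_ofReal_lt_mul {α : Type*} [MeasurableSpace α]
    (μ : Measure α) [SFinite μ] {F : α → ℝ≥0∞} (hF : Measurable F) {p : ℝ} (hp : 0 < p) :
    ∫⁻ x, F x ^ p ∂μ =
      ENNReal.ofReal p * ∫⁻ t in Ioi 0, μ {x | ENNReal.ofReal t < F x} *
        ENNReal.ofReal (t ^ (p - 1)) := by
  have hmeas : Measurable (Function.uncurry fun x (t : ℝ) =>
      {t : ℝ | ENNReal.ofReal t < F x}.indicator (fun t => ENNReal.ofReal (t ^ (p - 1))) t) := by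
    simp only [Function.uncurry_def, indicator_apply, mem_ofPred_eq]
    exact Measurable.ite (measurableSet_lt (by fun_prop) (by fun_prop)) (by fun_prop)
      measurable_const
  calc ∫⁻ x, F x ^ p ∂μ
      = ∫⁻ x, ENNReal.ofReal p * (∫⁻ t in Ioi (0 : ℝ), {t : ℝ | ENNReal.ofReal t < F x}.indicator
          (fun t => ENNReal.ofReal (t ^ (p - 1))) t) ∂μ := by
        refine lintegral_congr fun x => ?_
        rw [lintegral_Ioi_indicator_ofReal_rpow_sub_one _ hp,
          ENNReal.mul_div_cancel (ENNReal.ofReal_pos.2 hp).ne' ofReal_ne_top]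
    _ = ENNReal.ofReal p * ∫⁻ t in Ioi (0 : ℝ), ∫⁻ x, {t : ℝ | ENNReal.ofReal t < F x}.indicator
          (fun t => ENNReal.ofReal (t ^ (p - 1))) t ∂μ := by
        rw [lintegral_const_mul' _ _ ofReal_ne_top, lintegral_lintegral_swap hmeas.aemeasurable]
    _ = _ := by
        congr 1
        refine setLIntegral_congr_fun measurableSet_Ioi fun t _ => ?_
        rw [mul_comm, ← lintegral_indicator_const (measurableSet_lt measurable_const hF)]
        refine lintegral_congr fun x => ?_
        simp [indicator_apply]

lemma lintegral_Ioi_lintegral_indicator_two_mul_lt {α : Type*} [MeasurableSpace α]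
    (μ : Measure α) [SFinite μ] {f h : α → ℝ≥0∞} (hf : Measurable f) (hh : Measurable h)
    {p : ℝ} (hp : 0 < p) :
    ∫⁻ t in Ioi 0, (∫⁻ x, {y | ENNReal.ofReal t < 2 * f y}.indicator f x * h x ∂μ) *
        ENNReal.ofReal (t ^ (p - 1)) =
      2 ^ p / ENNReal.ofReal p * ∫⁻ x, f x ^ (p + 1) * h x ∂μ := by
  set w : ℝ≥0∞ → ℝ → ℝ≥0∞ := fun a => {t : ℝ | ENNReal.ofReal t < a}.indicator
    (fun t => ENNReal.ofReal (t ^ (p - 1)))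
  have hwa : ∀ a, Measurable (w a) := fun a =>
    (by fun_prop : Measurable fun t : ℝ => ENNReal.ofReal (t ^ (p - 1))).indicator
      (measurableSet_lt ENNReal.measurable_ofReal measurable_const)
  have hw : Measurable (Function.uncurry fun t x => w (2 * f x) t) := by
    simp only [w, Function.uncurry_def, indicator_apply, mem_ofPred_eq]
    exact Measurable.ite (measurableSet_lt (by fun_prop) (by fun_prop)) (by fun_prop)
      measurable_const
  have hfhw : Measurable (Function.uncurry fun t x => f x * h x * w (2 * f x) t) :=
    ((hf.comp measurable_snd).mul (hh.comp measurable_snd)).mul hw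
  calc ∫⁻ t in Ioi 0, (∫⁻ x, {y | ENNReal.ofReal t < 2 * f y}.indicator f x * h x ∂μ) *
        ENNReal.ofReal (t ^ (p - 1))
      = ∫⁻ t in Ioi 0, ∫⁻ x, f x * h x * w (2 * f x) t ∂μ := by
        refine lintegral_congr fun t => ?_
        rw [← lintegral_mul_const' _ _ ofReal_ne_top]
        refine lintegral_congr fun x => ?_
        by_cases hx : ENNReal.ofReal t < 2 * f x <;> simp [w, hx]
    _ = ∫⁻ x, f x * h x * ((2 * f x) ^ p / ENNReal.ofReal p) ∂μ := by
        rw [lintegral_lintegral_swap hfhw.aemeasurable]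
        refine lintegral_congr fun x => ?_
        rw [lintegral_const_mul _ (hwa _),
          lintegral_Ioi_indicator_ofReal_rpow_sub_one _ hp]
    _ = 2 ^ p / ENNReal.ofReal p * ∫⁻ x, f x ^ (p + 1) * h x ∂μ := by
        rw [← lintegral_const_mul' _ _ (ENNReal.div_ne_top (by simp) (ENNReal.ofReal_pos.2 hp).ne')]
        refine lintegral_congr fun x => ?_
        rw [ENNReal.mul_rpow_of_nonneg _ _ hp.le, ENNReal.rpow_add_of_nonneg _ _ hp.le zero_le_one,
          ENNReal.rpow_one]
        simp only [div_eq_mul_inv]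
        ring

lemma lintegral_maximal_rpow_withDensity_le {n : ℕ} {f g : En n → ℝ≥0∞} (hf : Measurable f)
    {η : ℝ} (hη : 1 < η) :
    ∫⁻ x, maximal f x ^ η ∂volume.withDensity g ≤
      2 ^ η * 5 ^ n * ENNReal.ofReal (η / (η - 1)) * ∫⁻ x, f x ^ η * maximal g x := by
  have hη1 : 0 < η - 1 := by linarith
  set I : ℝ → ℝ≥0∞ := fun t => ∫⁻ x, {y | ENNReal.ofReal t < 2 * f y}.indicator f x * maximal g x
  calc ∫⁻ x, maximal f x ^ η ∂volume.withDensity g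
      = ENNReal.ofReal η * ∫⁻ t in Ioi 0, volume.withDensity g
          {x | ENNReal.ofReal t < maximal f x} * ENNReal.ofReal (t ^ (η - 1)) :=
        lintegral_rpow_eq_lintegral_meas_ofReal_lt_mul _ (measurable_maximal f) (by linarith)
    _ ≤ ENNReal.ofReal η * ∫⁻ t in Ioi 0, 2 * 5 ^ n * (I t * ENNReal.ofReal (t ^ (η - 1 - 1))) := by
        gcongr ENNReal.ofReal η * ?_
        refine setLIntegral_mono' measurableSet_Ioi fun t ht => ?_
        have hsplit : t ^ (η - 1) = t * t ^ (η - 1 - 1) := by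
          rw [mul_comm, ← Real.rpow_add_one (ne_of_gt ht), sub_add_cancel]
        rw [hsplit, ENNReal.ofReal_mul (le_of_lt ht), ← mul_assoc, ← mul_assoc,
          mul_comm _ (ENNReal.ofReal t)]
        gcongr ?_ * _
        exact mul_withDensity_lt_maximal_le_indicator f g ofReal_ne_top
    _ = ENNReal.ofReal η * (2 * 5 ^ n * (2 ^ (η - 1) / ENNReal.ofReal (η - 1) *
          ∫⁻ x, f x ^ (η - 1 + 1) * maximal g x)) := by
        rw [lintegral_const_mul' _ _ (by finiteness),
          lintegral_Ioi_lintegral_indicator_two_mul_lt _ hf (measurable_maximal g) hη1]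
    _ = 2 ^ η * 5 ^ n * ENNReal.ofReal (η / (η - 1)) * ∫⁻ x, f x ^ η * maximal g x := by
        have h2 : (2 : ℝ≥0∞) ^ η = 2 ^ (η - 1) * 2 := by
          simpa using ENNReal.rpow_add_of_nonneg (x := 2) (η - 1) 1 hη1.le zero_le_one
        rw [sub_add_cancel, ENNReal.ofReal_div_of_pos hη1, h2]
        simp only [div_eq_mul_inv]
        ring

/-- the Fefferman–Stein dual inequality
`∫ (Mf)^η g ≤ C ∫ f^η Mg` for `η > 1`. -/
theorem statement19 {n : ℕ} (η : ℝ) (hη : 1 < η) :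
    ∃ C : ℝ≥0∞, 0 < C ∧ C ≠ ∞ ∧
      ∀ f g : En n → ℝ≥0∞, Measurable f → Measurable g →
        ∫⁻ x, maximal f x ^ η * g x ≤ C * ∫⁻ x, f x ^ η * maximal g x := by
  have hpos : 0 < η / (η - 1) := div_pos (by linarith) (by linarith)
  refine ⟨2 ^ η * 5 ^ n * ENNReal.ofReal (η / (η - 1)), by positivity, by finiteness,
    fun f g hf hg => ?_⟩
  calc ∫⁻ x, maximal f x ^ η * g x
      = ∫⁻ x, maximal f x ^ η ∂volume.withDensity g := by
        rw [lintegral_withDensity_eq_lintegral_mul _ hg ((measurable_maximal f).pow_const η)]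
        simp only [Pi.mul_apply, mul_comm]
    _ ≤ _ := lintegral_maximal_rpow_withDensity_le hf hη
end
end
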